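/- No PPT measurement can perfectly distinguish the four states ψ₀⊗ψ₀, ψ₁⊗ψ₃, ψ₂⊗ψ₃, ψ₃⊗ψ₃ on ℂ⁴⊗ℂ⁴: for any PPT operators P₁,…,P₄ summing to the identity, (1/4)·Σⱼ ⟨Pⱼ, ρⱼ⟩ ≤ 7/8 < 1. -/

import Mathlib

open Matrix

noncomputable def pauli : Fin 4 → Matrix (Fin 2) (Fin 2) ℂ
  | 0 => 1
  | 1 => !![0, 1; 1, 0]
  | 2 => !![0, -Complex.I; Complex.I, 0]
  | 3 => !![1, 0; 0, -1]

/-- Density operator of the Bell state `|ψᵢ⟩ = (1 ⊗ σᵢ)|ψ₀⟩`,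
`|ψ₀⟩ = (|00⟩+|11⟩)/√2`, as a matrix on `ℂ² ⊗ ℂ²`. -/
noncomputable def bell (i : Fin 4) :
    Matrix (Fin 2 × Fin 2) (Fin 2 × Fin 2) ℂ :=
  fun p q => (1 / 2 : ℂ) * pauli i p.2 p.1 * (starRingEnd ℂ) (pauli i q.2 q.1)

/-- Partial transpose on the first tensor factor. -/
def PT {d : ℕ} (X : Matrix (Fin d × Fin d) (Fin d × Fin d) ℂ) :
    Matrix (Fin d × Fin d) (Fin d × Fin d) ℂ :=
  fun p q => X (q.1, p.2) (p.1, q.2)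

open Kronecker
open scoped ComplexOrder

/-- Partial transpose on both of Alice's qubits, acting factorwise on
`(ℂ²⊗ℂ²) ⊗ (ℂ²⊗ℂ²)`. -/
def PT2 (X : Matrix ((Fin 2 × Fin 2) × (Fin 2 × Fin 2))
    ((Fin 2 × Fin 2) × (Fin 2 × Fin 2)) ℂ) :
    Matrix ((Fin 2 × Fin 2) × (Fin 2 × Fin 2)) ((Fin 2 × Fin 2) × (Fin 2 × Fin 2)) ℂ :=
  fun p q => X ((q.1.1, p.1.2), (q.2.1, p.2.2)) ((p.1.1, q.1.2), (p.2.1, q.2.2))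

/-- The four states of Yu–Duan–Ying's example. -/
noncomputable def ydy : Fin 4 → Matrix ((Fin 2 × Fin 2) × (Fin 2 × Fin 2))
    ((Fin 2 × Fin 2) × (Fin 2 × Fin 2)) ℂ
  | 0 => bell 0 ⊗ₖ bell 0
  | 1 => bell 1 ⊗ₖ bell 3
  | 2 => bell 2 ⊗ₖ bell 3
  | 3 => bell 3 ⊗ₖ bell 3

/-!
Weak duality for the PPT relaxation: if `Z - ρⱼ^Γ ≥ 0` for every `j` (`Γ` the partial transpose),
then for PPT `Pⱼ` summing to `1`, `∑ Tr(Pⱼ ρⱼ) = ∑ Tr(Pⱼ^Γ ρⱼ^Γ) ≤ ∑ Tr(Pⱼ^Γ Z) = Tr Z`.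
Since `ψᵢ^Γ = 1/2 - ψ_σ(i)` with `σ = (0 2)(1 3)`, each `ρⱼ^Γ` is `(1/2 - p) ⊗ (1/2 - q)` for Bell
projections `p`, `q`, and for `Z = 1/4 - (ψ₂ ⊗ ψ₁)/2` one gets
`Z - ρⱼ^Γ = (p ⊗ (1 - q) + (1 - p) ⊗ q - ψ₂ ⊗ ψ₁) / 2`. This is positive because `ψ₂ ⊗ ψ₁` sits
under one of the two summands: `p ⟂ ψ₂, q = ψ₁` for `j = 1, 2, 3` and `p = ψ₂, q ⟂ ψ₁` for `j = 0`.
Finally `Tr Z = 7/2`, so the success probability is at most `7/8`.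
-/

section Kronecker

variable {R : Type*} [CommRing R] {n m : Type*}

theorem sub_kronecker (A B : Matrix n n R) (C : Matrix m m R) :
    (A - B) ⊗ₖ C = A ⊗ₖ C - B ⊗ₖ C :=
  (kroneckerBilinear (R := R)).map_sub₂ A B C

theorem kronecker_sub (A : Matrix n n R) (B C : Matrix m m R) :
    A ⊗ₖ (B - C) = A ⊗ₖ B - A ⊗ₖ C :=
  (kroneckerBilinear (R := R) A).map_sub B C

end Kronecker

section StarProjection

open scoped MatrixOrder

variable {𝕜 : Type*} [RCLike 𝕜] {n m : Type*} [Fintype n] [Fintype m]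

theorem IsStarProjection.posSemidef {p : Matrix n n 𝕜} (hp : IsStarProjection p) :
    p.PosSemidef :=
  Matrix.nonneg_iff_posSemidef.mp hp.nonneg

variable [DecidableEq n] [DecidableEq m]

theorem Matrix.PosSemidef.trace_mul_nonneg {A B : Matrix n n 𝕜} (hA : A.PosSemidef)
    (hB : B.PosSemidef) : 0 ≤ (A * B).trace := by
  obtain ⟨C, rfl⟩ := CStarAlgebra.nonneg_iff_eq_star_mul_self.mp hB.nonneg
  rw [← Matrix.mul_assoc, Matrix.trace_mul_cycle]
  exact (hA.mul_mul_conjTranspose_same C).trace_nonneg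

def projXor (p : Matrix n n 𝕜) (q : Matrix m m 𝕜) : Matrix (n × m) (n × m) 𝕜 :=
  p ⊗ₖ (1 - q) + (1 - p) ⊗ₖ q

theorem posSemidef_projXor_sub_kronecker_of_mul_left {p r : Matrix n n 𝕜}
    {q : Matrix m m 𝕜} (hp : IsStarProjection p) (hq : IsStarProjection q)
    (hr : IsStarProjection r) (hpr : p * r = 0) :
    (projXor p q - r ⊗ₖ q).PosSemidef := by
  have hrest : IsStarProjection (1 - p - r) := by
    simpa only [sub_sub] using (hp.add hr hpr).one_sub
  have : projXor p q - r ⊗ₖ q = p ⊗ₖ (1 - q) + (1 - p - r) ⊗ₖ q := by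
    rw [projXor, sub_kronecker (1 - p)]
    abel
  rw [this]
  exact (hp.posSemidef.kronecker hq.one_sub.posSemidef).add
    (hrest.posSemidef.kronecker hq.posSemidef)

theorem posSemidef_projXor_sub_kronecker_of_mul_right {p : Matrix n n 𝕜}
    {q s : Matrix m m 𝕜} (hp : IsStarProjection p) (hq : IsStarProjection q)
    (hs : IsStarProjection s) (hqs : q * s = 0) :
    (projXor p q - p ⊗ₖ s).PosSemidef := by
  have hrest : IsStarProjection (1 - q - s) := by
    simpa only [sub_sub] using (hq.add hs hqs).one_sub
  have : projXor p q - p ⊗ₖ s = p ⊗ₖ (1 - q - s) + (1 - p) ⊗ₖ q := by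
    rw [projXor, kronecker_sub p (1 - q)]
    abel
  rw [this]
  exact (hp.posSemidef.kronecker hrest.posSemidef).add
    (hp.one_sub.posSemidef.kronecker hq.posSemidef)

end StarProjection

local notation "Q₂" => Fin 2 × Fin 2

section Bell

noncomputable def bellVec (i : Fin 4) : Matrix Q₂ (Fin 1) ℂ :=
  fun p _ => pauli i p.2 p.1

theorem bell_eq_smul_bellVec_mul (i : Fin 4) :
    bell i = (1 / 2 : ℂ) • (bellVec i * (bellVec i)ᴴ) := by
  ext p q
  simp [bell, bellVec, Matrix.mul_apply, Matrix.conjTranspose_apply]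
  ring

theorem conjTranspose_bellVec_mul_bellVec (i j : Fin 4) :
    (bellVec i)ᴴ * bellVec j = if i = j then (2 : ℂ) • 1 else 0 := by
  fin_cases i <;> fin_cases j <;> ext a b <;> fin_cases a <;> fin_cases b <;>
    norm_num [bellVec, pauli, Matrix.mul_apply, Fintype.sum_prod_type, Matrix.conjTranspose_apply,
      Complex.ext_iff]

theorem bell_mul_bell (i j : Fin 4) : bell i * bell j = if i = j then bell i else 0 := by
  simp only [bell_eq_smul_bellVec_mul, smul_mul_smul_comm, Matrix.mul_assoc,
    ← Matrix.mul_assoc (bellVec i)ᴴ, conjTranspose_bellVec_mul_bellVec]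
  split_ifs with h
  · subst h
    simp [smul_smul]
  · simp

theorem isStarProjection_bell (i : Fin 4) : IsStarProjection (bell i) where
  isIdempotentElem := by simpa [IsIdempotentElem] using bell_mul_bell i i
  isSelfAdjoint := by
    rw [bell_eq_smul_bellVec_mul, IsSelfAdjoint, star_smul, Matrix.star_eq_conjTranspose,
      conjTranspose_mul, conjTranspose_conjTranspose]
    norm_num

theorem bell_mul_bell_of_ne {i j : Fin 4} (h : i ≠ j) : bell i * bell j = 0 := by
  simp [bell_mul_bell, h]

theorem trace_bell (i : Fin 4) : (bell i).trace = 1 := by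
  rw [bell_eq_smul_bellVec_mul, trace_smul, trace_mul_comm, conjTranspose_bellVec_mul_bellVec]
  simp

theorem PT_bell (i : Fin 4) : PT (bell i) = (1 / 2 : ℂ) • 1 - bell (![2, 3, 0, 1] i) := by
  fin_cases i <;> ext ⟨a, b⟩ ⟨c, d⟩ <;> fin_cases a <;> fin_cases b <;> fin_cases c <;>
    fin_cases d <;> norm_num [PT, bell, pauli, Matrix.one_apply, Complex.ext_iff]

end Bell

section PartialTranspose

theorem PT_one {d : ℕ} : PT (1 : Matrix (Fin d × Fin d) (Fin d × Fin d) ℂ) = 1 := by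
  ext p q
  simp only [PT, one_apply, Prod.ext_iff]
  grind

theorem PT2_kronecker (A B : Matrix Q₂ Q₂ ℂ) : PT2 (A ⊗ₖ B) = PT A ⊗ₖ PT B := rfl

theorem PT2_one : PT2 (1 : Matrix (Q₂ × Q₂) (Q₂ × Q₂) ℂ) = 1 := by
  rw [← one_kronecker_one, PT2_kronecker, PT_one]

theorem PT2_sum {ι : Type*} (s : Finset ι) (P : ι → Matrix (Q₂ × Q₂) (Q₂ × Q₂) ℂ) :
    PT2 (∑ j ∈ s, P j) = ∑ j ∈ s, PT2 (P j) := by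
  ext p q
  simp [PT2, Matrix.sum_apply]

theorem trace_PT2_mul (A B : Matrix (Q₂ × Q₂) (Q₂ × Q₂) ℂ) :
    (PT2 A * PT2 B).trace = (A * B).trace := by
  let swap (p q : Q₂ × Q₂) : Q₂ × Q₂ := ((p.1.1, q.1.2), (p.2.1, q.2.2))
  have hswap : Function.Involutive fun x : (Q₂ × Q₂) × (Q₂ × Q₂) => (swap x.2 x.1, swap x.1 x.2) :=
    fun _ => rfl
  simp only [trace, diag, mul_apply, ← Fintype.sum_prod_type']
  exact Fintype.sum_equiv hswap.toPerm _ _ fun _ => rfl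

theorem sum_re_trace_le_of_PT2_le {ι : Type*} [Fintype ι]
    (P ρ : ι → Matrix (Q₂ × Q₂) (Q₂ × Q₂) ℂ) (Z : Matrix (Q₂ × Q₂) (Q₂ × Q₂) ℂ)
    (hP : ∀ j, (P j).IsHermitian) (hPT : ∀ j, (PT2 (P j)).PosSemidef) (hsum : ∑ j, P j = 1)
    (hZ : ∀ j, (Z - PT2 (ρ j)).PosSemidef) :
    ∑ j, (trace ((P j)ᴴ * ρ j)).re ≤ Z.trace.re := by
  have hterm (j : ι) : (trace ((P j)ᴴ * ρ j)).re ≤ (trace (PT2 (P j) * Z)).re := by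
    have hgap := (Complex.le_def.mp ((hPT j).trace_mul_nonneg (hZ j))).1
    rw [mul_sub, trace_sub, Complex.sub_re, trace_PT2_mul] at hgap
    rw [(hP j).eq]
    simpa [sub_nonneg] using hgap
  calc ∑ j, (trace ((P j)ᴴ * ρ j)).re ≤ ∑ j, (trace (PT2 (P j) * Z)).re :=
        Finset.sum_le_sum fun j _ => hterm j
    _ = Z.trace.re := by
        rw [← Complex.re_sum, ← trace_sum, ← Finset.sum_mul, ← PT2_sum, hsum, PT2_one, one_mul]

end PartialTranspose

noncomputable def ydyWitness : Matrix (Q₂ × Q₂) (Q₂ × Q₂) ℂ :=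
  (1 / 4 : ℂ) • 1 - (1 / 2 : ℂ) • (bell 2 ⊗ₖ bell 1)

theorem trace_ydyWitness : ydyWitness.trace = 7 / 2 := by
  rw [ydyWitness, trace_sub, trace_smul, trace_smul, trace_one, trace_kronecker, trace_bell,
    trace_bell]
  norm_num [Fintype.card_prod]

theorem ydyWitness_sub_kronecker (p q : Matrix Q₂ Q₂ ℂ) :
    ydyWitness - ((1 / 2 : ℂ) • 1 - p) ⊗ₖ ((1 / 2 : ℂ) • 1 - q) =
      (1 / 2 : ℂ) • (projXor p q - bell 2 ⊗ₖ bell 1) := by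
  simp only [ydyWitness, projXor, sub_kronecker, kronecker_sub, smul_kronecker, kronecker_smul,
    one_kronecker_one]
  module

theorem posSemidef_ydyWitness_sub_PT2_ydy (j : Fin 4) :
    (ydyWitness - PT2 (ydy j)).PosSemidef := by
  have hhalf : (0 : ℂ) ≤ 1 / 2 := by positivity
  fin_cases j <;> simp only [ydy, PT2_kronecker, PT_bell] <;> rw [ydyWitness_sub_kronecker] <;>
    refine .smul ?_ hhalf
  · exact posSemidef_projXor_sub_kronecker_of_mul_right (isStarProjection_bell _)
      (isStarProjection_bell 2) (isStarProjection_bell 1) (bell_mul_bell_of_ne (by decide))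
  all_goals
    exact posSemidef_projXor_sub_kronecker_of_mul_left (isStarProjection_bell _)
      (isStarProjection_bell 1) (isStarProjection_bell 2) (bell_mul_bell_of_ne (by decide))

/-- No PPT measurement perfectly distinguishes the four states
`ψ₀⊗ψ₀, ψ₁⊗ψ₃, ψ₂⊗ψ₃, ψ₃⊗ψ₃`: the success probability is at most `7/8 < 1`. -/
theorem ydy_ppt_indistinguishable
    (P : Fin 4 → Matrix ((Fin 2 × Fin 2) × (Fin 2 × Fin 2))
        ((Fin 2 × Fin 2) × (Fin 2 × Fin 2)) ℂ)
    (hP : ∀ j, (P j).PosSemidef) (hPT : ∀ j, (PT2 (P j)).PosSemidef)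
    (hsum : ∑ j, P j = 1) :
    (1 / 4 : ℝ) * ∑ j, (Matrix.trace ((P j)ᴴ * ydy j)).re ≤ 7 / 8 ∧ (7 / 8 : ℝ) < 1 := by
  refine ⟨?_, by norm_num⟩
  have hbound := sum_re_trace_le_of_PT2_le P ydy ydyWitness (fun j => (hP j).isHermitian) hPT
    hsum posSemidef_ydyWitness_sub_PT2_ydy
  rw [trace_ydyWitness] at hbound
  norm_num at hbound
  linarith
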